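/- arXiv:1006.5581 — 6 statements merged into one kernel-verified Lean document; each statement's English description precedes it below -/
import Mathlib

section
/- Let z₁, z₂, z₃, z₄ ∈ ℂ³ be nonzero null vectors (⟨z_i,z_i⟩ = 0) with ⟨z_i, z_j⟩ ≠ 0 for all i ≠ j, and set 𝕏₁ = [z₁,z₂,z₃,z₄], 𝕏₂ = [z₁,z₃,z₂,z₄], 𝕏₃ = [z₂,z₃,z₁,z₄]. If 𝕏₁, 𝕏₂, 𝕏₃ are all real and 𝕏₃ = −𝕏₂/𝕏₁, then the four points lie on a common complex line: the vectors z₁, z₂, z₃, z₄ span a complex subspace of ℂ³ of dimension at most 2. -/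
open Complex

noncomputable section

/-- The Hermitian form ⟨z,w⟩ = z₁·conj(w₃) + z₂·conj(w₂) + z₃·conj(w₁) on ℂ³. -/
def herm (z w : Fin 3 → ℂ) : ℂ :=
  z 0 * (starRingEnd ℂ) (w 2) + z 1 * (starRingEnd ℂ) (w 1) + z 2 * (starRingEnd ℂ) (w 0)

/-- The Korányi–Reimann cross-ratio [z₁,z₂,z₃,z₄]. -/
def crossRatio (z₁ z₂ z₃ z₄ : Fin 3 → ℂ) : ℂ :=
  (herm z₃ z₁ * herm z₄ z₂) / (herm z₄ z₁ * herm z₃ z₂)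

lemma herm_conj (z w : Fin 3 → ℂ) : herm w z = (starRingEnd ℂ) (herm z w) := by
  simp only [herm, map_add, map_mul, Complex.conj_conj]; ring

lemma herm_add_left (a b w : Fin 3 → ℂ) : herm (a + b) w = herm a w + herm b w := by
  simp only [herm, Pi.add_apply]; ring

lemma herm_smul_left (c : ℂ) (a w : Fin 3 → ℂ) : herm (c • a) w = c * herm a w := by
  simp only [herm, Pi.smul_apply, smul_eq_mul]; ring

/-- Gram determinant identity for the form `herm`. -/
lemma gram_det (a b c : Fin 3 → ℂ) :
    herm a b * herm b c * herm c a + herm b a * herm c b * herm a c =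
      herm a a * (herm b c * herm c b) + herm b b * (herm c a * herm a c)
      + herm c c * (herm a b * herm b a) - herm a a * herm b b * herm c c
      - Matrix.det ![a, b, c] * (starRingEnd ℂ) (Matrix.det ![a, b, c]) := by
  show _ = _ - Matrix.det (Matrix.of ![a, b, c]) * (starRingEnd ℂ) (Matrix.det (Matrix.of ![a, b, c]))
  rw [Matrix.det_fin_three]
  simp only [herm, Matrix.of_apply, Matrix.cons_val', Matrix.cons_val_zero, Matrix.cons_val_one, Matrix.head_cons,
    Matrix.empty_val', Matrix.cons_val_fin_one, Matrix.head_fin_const, Matrix.cons_val_two,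
    Matrix.tail_cons, map_add, map_mul, map_sub, Complex.conj_conj]
  ring

lemma mem_span_of_det_eq_zero {v w x : Fin 3 → ℂ}
    (hvw : LinearIndependent ℂ ![v, w]) (hd : Matrix.det ![v, w, x] = 0) :
    x ∈ Submodule.span ℂ ({v, w} : Set (Fin 3 → ℂ)) := by
  by_contra hx
  have hx' : x ∉ Submodule.span ℂ (Set.range ![v, w]) := by
    rwa [show Set.range ![v, w] = {v, w} by
      simp [Matrix.range_cons, Matrix.range_empty]; exact Set.pair_comm w v]
  have hsnoc : LinearIndependent ℂ (Fin.snoc ![v, w] x : Fin 3 → Fin 3 → ℂ) :=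
    linearIndependent_fin_snoc.mpr ⟨hvw, hx'⟩
  have heq : (Fin.snoc ![v, w] x : Fin 3 → Fin 3 → ℂ) = ![v, w, x] := by
    funext i
    fin_cases i <;> simp [Fin.snoc] <;> rfl
  rw [heq] at hsnoc
  have : IsUnit (Matrix.of ![v, w, x]) :=
    Matrix.linearIndependent_rows_iff_isUnit.mp hsnoc
  rw [Matrix.isUnit_iff_isUnit_det] at this
  exact this.ne_zero hd

/-- Proposition 2.2(i): if 𝕏₁, 𝕏₂, 𝕏₃ are all real and 𝕏₃ = −𝕏₂/𝕏₁, then the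
four points lie on a common complex line: z₁, z₂, z₃, z₄ span a complex subspace
of ℂ³ of dimension at most 2. -/
theorem cross_ratios_real_neg_iff_complex_line
    (z₁ z₂ z₃ z₄ : Fin 3 → ℂ)
    (hz₁ : z₁ ≠ 0) (hz₂ : z₂ ≠ 0) (hz₃ : z₃ ≠ 0) (hz₄ : z₄ ≠ 0)
    (hn₁ : herm z₁ z₁ = 0) (hn₂ : herm z₂ z₂ = 0)
    (hn₃ : herm z₃ z₃ = 0) (hn₄ : herm z₄ z₄ = 0)
    (hne : ∀ i j : Fin 4, i ≠ j → herm (![z₁, z₂, z₃, z₄] i) (![z₁, z₂, z₃, z₄] j) ≠ 0)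
    (h₁ : (crossRatio z₁ z₂ z₃ z₄).im = 0)
    (h₂ : (crossRatio z₁ z₃ z₂ z₄).im = 0)
    (h₃ : (crossRatio z₂ z₃ z₁ z₄).im = 0)
    (h : crossRatio z₂ z₃ z₁ z₄ = -(crossRatio z₁ z₃ z₂ z₄ / crossRatio z₁ z₂ z₃ z₄)) :
    Module.finrank ℂ
      ↥(Submodule.span ℂ ({z₁, z₂, z₃, z₄} : Set (Fin 3 → ℂ))) ≤ 2 := by
  classical
  have h12 : herm z₁ z₂ ≠ 0 := by simpa using hne 0 1 (by decide)
  have h13 : herm z₁ z₃ ≠ 0 := by simpa using hne 0 2 (by decide)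
  have h14 : herm z₁ z₄ ≠ 0 := by simpa using hne 0 3 (by decide)
  have h23 : herm z₂ z₃ ≠ 0 := by simpa using hne 1 2 (by decide)
  have h24 : herm z₂ z₄ ≠ 0 := by simpa using hne 1 3 (by decide)
  have h21 : herm z₂ z₁ ≠ 0 := by simpa using hne 1 0 (by decide)
  have h31 : herm z₃ z₁ ≠ 0 := by simpa using hne 2 0 (by decide)
  have h41 : herm z₄ z₁ ≠ 0 := by simpa using hne 3 0 (by decide)
  have h32 : herm z₃ z₂ ≠ 0 := by simpa using hne 2 1 (by decide)
  have h42 : herm z₄ z₂ ≠ 0 := by simpa using hne 3 1 (by decide)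
  have h43 : herm z₄ z₃ ≠ 0 := by simpa using hne 3 2 (by decide)
  -- Step A : the triple Hermitian product of z₁,z₂,z₃ is purely imaginary
  rw [crossRatio, crossRatio, crossRatio] at h
  field_simp at h
  have A : herm z₁ z₂ * herm z₂ z₃ * herm z₃ z₁
      + herm z₂ z₁ * herm z₃ z₂ * herm z₁ z₃ = 0 := by
    have hA : (herm z₁ z₂ * herm z₂ z₃ * herm z₃ z₁
        + herm z₂ z₁ * herm z₃ z₂ * herm z₁ z₃)
        * (herm z₄ z₃ * herm z₄ z₁ * herm z₄ z₂) = 0 := by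
      linear_combination (herm z₄ z₃ * herm z₄ z₁ * herm z₄ z₂) * h
    rcases mul_eq_zero.mp hA with h' | h'
    · exact h'
    · exact absurd h' (mul_ne_zero (mul_ne_zero h43 h41) h42)
  -- Step B : reality of 𝕏₁
  have hX1 : (starRingEnd ℂ) (crossRatio z₁ z₂ z₃ z₄) = crossRatio z₁ z₂ z₃ z₄ :=
    Complex.conj_eq_iff_im.mpr h₁
  simp only [crossRatio, map_div₀, map_mul, ← herm_conj] at hX1
  field_simp at hX1
  -- Step C : the triple Hermitian product of z₁,z₂,z₄ is purely imaginary
  have C : herm z₁ z₂ * herm z₂ z₄ * herm z₄ z₁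
      + herm z₂ z₁ * herm z₄ z₂ * herm z₁ z₄ = 0 := by
    have hC : (herm z₁ z₂ * herm z₂ z₄ * herm z₄ z₁
        + herm z₂ z₁ * herm z₄ z₂ * herm z₁ z₄)
        * (herm z₃ z₁ * herm z₄ z₂ * herm z₂ z₃) = 0 := by
      linear_combination (herm z₂ z₄ * herm z₄ z₁ * herm z₄ z₂) * A
        - (herm z₂ z₁ * herm z₄ z₂) * hX1
    rcases mul_eq_zero.mp hC with h' | h'
    · exact h'
    · exact absurd h' (mul_ne_zero (mul_ne_zero h31 h42) h23)
  -- determinants vanish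
  have hd3 : Matrix.det ![z₁, z₂, z₃] = 0 := by
    have g := gram_det z₁ z₂ z₃
    rw [hn₁, hn₂, hn₃] at g
    have hDD : Matrix.det ![z₁, z₂, z₃]
        * (starRingEnd ℂ) (Matrix.det ![z₁, z₂, z₃]) = 0 := by
      linear_combination g - A
    rcases mul_eq_zero.mp hDD with h' | h'
    · exact h'
    · simpa using h'
  have hd4 : Matrix.det ![z₁, z₂, z₄] = 0 := by
    have g := gram_det z₁ z₂ z₄
    rw [hn₁, hn₂, hn₄] at g
    have hDD : Matrix.det ![z₁, z₂, z₄]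
        * (starRingEnd ℂ) (Matrix.det ![z₁, z₂, z₄]) = 0 := by
      linear_combination g - C
    rcases mul_eq_zero.mp hDD with h' | h'
    · exact h'
    · simpa using h'
  -- z₁, z₂ are linearly independent
  have hind : LinearIndependent ℂ ![z₁, z₂] := by
    rw [LinearIndependent.pair_iff]
    intro s t hst
    have e1 : herm (s • z₁ + t • z₂) z₁ = 0 := by rw [hst]; simp [herm]
    rw [herm_add_left, herm_smul_left, herm_smul_left, hn₁, mul_zero, zero_add] at e1
    have ht : t = 0 := by
      rcases mul_eq_zero.mp e1 with h' | h'
      · exact h'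
      · exact absurd h' h21
    subst ht
    refine ⟨?_, rfl⟩
    rw [zero_smul, add_zero] at hst
    exact (smul_eq_zero.mp hst).resolve_right hz₁
  have hm3 : z₃ ∈ Submodule.span ℂ ({z₁, z₂} : Set (Fin 3 → ℂ)) :=
    mem_span_of_det_eq_zero hind hd3
  have hm4 : z₄ ∈ Submodule.span ℂ ({z₁, z₂} : Set (Fin 3 → ℂ)) :=
    mem_span_of_det_eq_zero hind hd4
  have hsub : Submodule.span ℂ ({z₁, z₂, z₃, z₄} : Set (Fin 3 → ℂ))
      ≤ Submodule.span ℂ ({z₁, z₂} : Set (Fin 3 → ℂ)) := by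
    rw [Submodule.span_le]
    intro x hx
    simp only [Set.mem_insert_iff, Set.mem_singleton_iff] at hx
    rcases hx with rfl | rfl | rfl | rfl
    · exact Submodule.subset_span (Set.mem_insert _ _)
    · exact Submodule.subset_span (Set.mem_insert_of_mem _ rfl)
    · exact hm3
    · exact hm4
  refine le_trans (Submodule.finrank_mono hsub) ?_
  refine le_trans (finrank_span_le_card _) ?_
  rw [Set.toFinset_insert, Set.toFinset_singleton]
  exact le_trans (Finset.card_insert_le _ _) (by simp)
end
end

section
/- Let z₁, z₂, z₃, z₄ ∈ ℂ³ be nonzero null vectors (⟨z_i,z_i⟩ = 0) with ⟨z_i, z_j⟩ ≠ 0 for all i ≠ j, and set 𝕏₁ = [z₁,z₂,z₃,z₄], 𝕏₂ = [z₁,z₃,z₂,z₄], 𝕏₃ = [z₂,z₃,z₁,z₄]. If 𝕏₁, 𝕏₂, 𝕏₃ are all real and 𝕏₃ = 𝕏₂/𝕏₁, then the four points lie on a common Lagrangian plane: there exist nonzero complex scalars λ₁, λ₂, λ₃, λ₄ such that ⟨λ_i z_i, λ_j z_j⟩ is real for all i, j ∈ {1,2,3,4}. -/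
open Complex

noncomputable section

lemma herm_smul (a b : ℂ) (z w : Fin 3 → ℂ) :
    herm (a • z) (b • w) = a * (starRingEnd ℂ) b * herm z w := by
  simp only [herm, Pi.smul_apply, smul_eq_mul, map_mul]; ring

lemma key_lemma (p q r s t u : ℂ) (hp : p ≠ 0) (hq : q ≠ 0) (hs : s ≠ 0) (hu : u ≠ 0)
    (e2 : p * u * ((starRingEnd ℂ) r * s) = (starRingEnd ℂ) p * (starRingEnd ℂ) u * (r * (starRingEnd ℂ) s))
    (e3 : p * (starRingEnd ℂ) u * (t * (starRingEnd ℂ) q) = (starRingEnd ℂ) p * u * ((starRingEnd ℂ) t * q))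
    (e4 : p * s * (starRingEnd ℂ) q = (starRingEnd ℂ) p * (starRingEnd ℂ) s * q) :
    p * t * (starRingEnd ℂ) r = (starRingEnd ℂ) p * (starRingEnd ℂ) t * r ∧
    q * u * (starRingEnd ℂ) r = (starRingEnd ℂ) q * (starRingEnd ℂ) u * r := by
  have hq' : (starRingEnd ℂ) q ≠ 0 := by simpa using hq
  have hu' : (starRingEnd ℂ) u ≠ 0 := by simpa using hu
  have hC : q * u * (starRingEnd ℂ) r = (starRingEnd ℂ) q * (starRingEnd ℂ) u * r := by
    have h1 : q * u * (starRingEnd ℂ) r * (p * s) = (starRingEnd ℂ) q * (starRingEnd ℂ) u * r * (p * s) := by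
      linear_combination q * e2 - (starRingEnd ℂ) u * r * e4
    exact mul_right_cancel₀ (mul_ne_zero hp hs) h1
  have hB : p * t * (starRingEnd ℂ) r = (starRingEnd ℂ) p * (starRingEnd ℂ) t * r := by
    have h2 : p * t * (starRingEnd ℂ) r * ((starRingEnd ℂ) q * (starRingEnd ℂ) u) =
        (starRingEnd ℂ) p * (starRingEnd ℂ) t * r * ((starRingEnd ℂ) q * (starRingEnd ℂ) u) := by
      linear_combination (starRingEnd ℂ) r * e3 + (starRingEnd ℂ) p * (starRingEnd ℂ) t * hC
    exact mul_right_cancel₀ (mul_ne_zero hq' hu') h2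
  exact ⟨hB, hC⟩

/-- Proposition 2.2(ii): if 𝕏₁, 𝕏₂, 𝕏₃ are all real and 𝕏₃ = 𝕏₂/𝕏₁, then the four
points lie on a common Lagrangian plane: the lifts can be rescaled by nonzero complex
scalars so that all pairwise Hermitian products are real. -/
theorem cross_ratios_real_pos_iff_lagrangian
    (z₁ z₂ z₃ z₄ : Fin 3 → ℂ)
    (hz₁ : z₁ ≠ 0) (hz₂ : z₂ ≠ 0) (hz₃ : z₃ ≠ 0) (hz₄ : z₄ ≠ 0)
    (hn₁ : herm z₁ z₁ = 0) (hn₂ : herm z₂ z₂ = 0)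
    (hn₃ : herm z₃ z₃ = 0) (hn₄ : herm z₄ z₄ = 0)
    (hne : ∀ i j : Fin 4, i ≠ j → herm (![z₁, z₂, z₃, z₄] i) (![z₁, z₂, z₃, z₄] j) ≠ 0)
    (h₁ : (crossRatio z₁ z₂ z₃ z₄).im = 0)
    (h₂ : (crossRatio z₁ z₃ z₂ z₄).im = 0)
    (h₃ : (crossRatio z₂ z₃ z₁ z₄).im = 0)
    (h : crossRatio z₂ z₃ z₁ z₄ = crossRatio z₁ z₃ z₂ z₄ / crossRatio z₁ z₂ z₃ z₄) :
    ∃ l : Fin 4 → ℂ, (∀ i, l i ≠ 0) ∧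
      ∀ i j : Fin 4,
        (herm (l i • ![z₁, z₂, z₃, z₄] i) (l j • ![z₁, z₂, z₃, z₄] j)).im = 0 := by
  -- Notation: p = h₁₂, q = h₁₃, r = h₁₄, s = h₂₃, t = h₂₄, u = h₃₄
  have hp : herm z₁ z₂ ≠ 0 := by have := hne 0 1 (by decide); simpa using this
  have hq : herm z₁ z₃ ≠ 0 := by have := hne 0 2 (by decide); simpa using this
  have hr : herm z₁ z₄ ≠ 0 := by have := hne 0 3 (by decide); simpa using this
  have hs : herm z₂ z₃ ≠ 0 := by have := hne 1 2 (by decide); simpa using this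
  have ht : herm z₂ z₄ ≠ 0 := by have := hne 1 3 (by decide); simpa using this
  have hu : herm z₃ z₄ ≠ 0 := by have := hne 2 3 (by decide); simpa using this
  have hp' : (starRingEnd ℂ) (herm z₁ z₂) ≠ 0 := by simpa using hp
  have hq' : (starRingEnd ℂ) (herm z₁ z₃) ≠ 0 := by simpa using hq
  have hr' : (starRingEnd ℂ) (herm z₁ z₄) ≠ 0 := by simpa using hr
  have hs' : (starRingEnd ℂ) (herm z₂ z₃) ≠ 0 := by simpa using hs
  have ht' : (starRingEnd ℂ) (herm z₂ z₄) ≠ 0 := by simpa using ht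
  have hu' : (starRingEnd ℂ) (herm z₃ z₄) ≠ 0 := by simpa using hu
  -- e2 from reality of 𝕏₂
  have e2 : herm z₁ z₂ * herm z₃ z₄ * ((starRingEnd ℂ) (herm z₁ z₄) * herm z₂ z₃) =
      (starRingEnd ℂ) (herm z₁ z₂) * (starRingEnd ℂ) (herm z₃ z₄) *
        (herm z₁ z₄ * (starRingEnd ℂ) (herm z₂ z₃)) := by
    have h2' : (starRingEnd ℂ) (crossRatio z₁ z₃ z₂ z₄) = crossRatio z₁ z₃ z₂ z₄ :=
      Complex.conj_eq_iff_im.mpr h₂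
    rw [crossRatio, herm_conj z₁ z₂, herm_conj z₁ z₄, herm_conj z₃ z₄] at h2'
    simp only [map_div₀, map_mul, Complex.conj_conj] at h2'
    field_simp at h2'
    first
    | linear_combination h2'
    | linear_combination -h2'
  -- e3 from reality of 𝕏₃
  have e3 : herm z₁ z₂ * (starRingEnd ℂ) (herm z₃ z₄) * (herm z₂ z₄ * (starRingEnd ℂ) (herm z₁ z₃)) =
      (starRingEnd ℂ) (herm z₁ z₂) * herm z₃ z₄ * ((starRingEnd ℂ) (herm z₂ z₄) * herm z₁ z₃) := by
    have h3' : (starRingEnd ℂ) (crossRatio z₂ z₃ z₁ z₄) = crossRatio z₂ z₃ z₁ z₄ :=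
      Complex.conj_eq_iff_im.mpr h₃
    rw [crossRatio, herm_conj z₂ z₄, herm_conj z₃ z₄] at h3'
    simp only [map_div₀, map_mul, Complex.conj_conj] at h3'
    field_simp at h3'
    first
    | linear_combination h3'
    | linear_combination -h3'
  -- e4 from 𝕏₃ = 𝕏₂ / 𝕏₁
  have e4 : herm z₁ z₂ * herm z₂ z₃ * (starRingEnd ℂ) (herm z₁ z₃) =
      (starRingEnd ℂ) (herm z₁ z₂) * (starRingEnd ℂ) (herm z₂ z₃) * herm z₁ z₃ := by
    have h' := h
    rw [crossRatio, crossRatio, crossRatio, herm_conj z₁ z₂, herm_conj z₁ z₃,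
      herm_conj z₁ z₄, herm_conj z₂ z₃, herm_conj z₂ z₄, herm_conj z₃ z₄] at h'
    field_simp at h'
    have hM : (starRingEnd ℂ) (herm z₃ z₄) * (starRingEnd ℂ) (herm z₁ z₄) *
        (starRingEnd ℂ) (herm z₂ z₄) ≠ 0 := mul_ne_zero (mul_ne_zero hu' hr') ht'
    refine mul_right_cancel₀ hM ?_
    first
    | linear_combination ((starRingEnd ℂ) (herm z₃ z₄) * (starRingEnd ℂ) (herm z₁ z₄) *
        (starRingEnd ℂ) (herm z₂ z₄)) * h'
    | linear_combination -h'
  obtain ⟨hB, hC⟩ := key_lemma (herm z₁ z₂) (herm z₁ z₃) (herm z₁ z₄) (herm z₂ z₃)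
    (herm z₂ z₄) (herm z₃ z₄) hp hq hs hu e2 e3 e4
  refine ⟨![1, herm z₁ z₂, herm z₁ z₃, herm z₁ z₄], ?_, ?_⟩
  · intro i
    fin_cases i <;> simp [hp, hq, hr]
  · intro i j
    fin_cases i <;> fin_cases j
    all_goals
      simp only [Fin.reduceFinMk, Fin.isValue, Matrix.cons_val_zero, Matrix.cons_val_one,
        Matrix.head_cons, Matrix.cons_val_two, Matrix.cons_val_three, Matrix.tail_cons,
        herm_smul]
    all_goals rw [← Complex.conj_eq_iff_im]
    all_goals
      simp only [herm_conj z₁ z₂, herm_conj z₁ z₃, herm_conj z₁ z₄, herm_conj z₂ z₃,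
        herm_conj z₂ z₄, herm_conj z₃ z₄, hn₁, hn₂, hn₃, hn₄, map_mul, map_one,
        map_zero, Complex.conj_conj, mul_zero]
    all_goals try ring
    all_goals
      first
      | linear_combination e4
      | linear_combination -e4
      | linear_combination hB
      | linear_combination -hB
      | linear_combination hC
      | linear_combination -hC
end
end

section
/- Let c, g be nonzero complex numbers and let t be a real number with t > 1. If the product c·g is real and the number t·g·conj(c) + (1/t)·c·conj(g) is real, then c is either real or purely imaginary (Re(c) = 0 or Im(c) = 0), and likewise g is either real or purely imaginary. -/
open Complex

noncomputable section

/-- Key step of Theorem 3.1: if c·g is real and t·g·conj(c) + (1/t)·c·conj(g) is real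
for some real t > 1 and nonzero complex numbers c, g, then c is real or purely
imaginary, and likewise g. -/
theorem real_or_purely_imaginary
    (c g : ℂ) (t : ℝ) (hc : c ≠ 0) (hg : g ≠ 0) (ht : 1 < t)
    (h₁ : (c * g).im = 0)
    (h₂ : ((t : ℂ) * g * (starRingEnd ℂ) c + (1 / (t : ℂ)) * c * (starRingEnd ℂ) g).im = 0) :
    (c.re = 0 ∨ c.im = 0) ∧ (g.re = 0 ∨ g.im = 0) := by
  obtain ⟨a, b, rfl⟩ : ∃ a b : ℝ, c = ⟨a, b⟩ := ⟨c.re, c.im, rfl⟩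
  obtain ⟨x, y, rfl⟩ : ∃ x y : ℝ, g = ⟨x, y⟩ := ⟨g.re, g.im, rfl⟩
  have ht0 : (0:ℝ) < t := by linarith
  have ht0' : t ≠ 0 := ne_of_gt ht0
  simp only [Complex.mul_im, Complex.add_im, Complex.mul_re, Complex.conj_re, Complex.conj_im,
    Complex.ofReal_re, Complex.ofReal_im, Complex.div_im, Complex.div_re, Complex.one_re,
    Complex.one_im, Complex.normSq_mk, Complex.normSq_ofReal] at h₁ h₂
  have h₂' : (t - 1/t) * (a * y - b * x) = 0 := by
    field_simp at h₂ ⊢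
    nlinarith [h₂]
  have htne : t - 1/t ≠ 0 := by
    have : 1/t < 1 := by rw [div_lt_one ht0]; linarith
    intro h; nlinarith
  have hkey : a * y - b * x = 0 := by
    rcases mul_eq_zero.1 h₂' with h | h
    · exact absurd h htne
    · exact h
  have hay : a * y = 0 := by nlinarith
  have hbx : b * x = 0 := by nlinarith
  have hc' : a ≠ 0 ∨ b ≠ 0 := by
    by_contra h
    push_neg at h
    exact hc (by simp [Complex.ext_iff, h.1, h.2])
  have hg' : x ≠ 0 ∨ y ≠ 0 := by
    by_contra h
    push_neg at h
    exact hg (by simp [Complex.ext_iff, h.1, h.2])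
  constructor
  · rcases mul_eq_zero.1 hay with h | h
    · exact Or.inl h
    · rcases mul_eq_zero.1 hbx with h' | h'
      · exact Or.inr h'
      · rcases hg' with hx | hy
        · exact absurd h' hx
        · exact absurd h hy
  · rcases mul_eq_zero.1 hay with h | h
    · rcases mul_eq_zero.1 hbx with h' | h'
      · rcases hc' with ha | hb
        · exact absurd h ha
        · exact absurd h' hb
      · exact Or.inl h'
    · exact Or.inr h
end
end

section
/- Let B = [[a,b,c],[d,e,f],[g,h,j]] ∈ M₃(ℂ) satisfy Bᴴ J B = J and det B = 1, where J = [[0,0,1],[0,1,0],[1,0,0]], and suppose c ≠ 0, g ≠ 0, a ≠ 0, j ≠ 0. Consider the four null vectors z₁ = (c,f,j), z₂ = (1,0,0), z₃ = (0,0,1), z₄ = (a,d,g) in ℂ³ (so z₁ = B(0) and z₄ = B(∞) are the images of 0 and ∞ under B). Then the three cross-ratios satisfy 𝕏₁ = [z₁,z₂,z₃,z₄] = g·conj(c), 𝕏₂ = [z₁,z₃,z₂,z₄] = a·conj(j), and 𝕏₃ = [z₂,z₃,z₁,z₄] = (a·j)/(g·c). -/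
open Matrix Complex

noncomputable section

/-- The Gram matrix of the Hermitian form of signature (2,1). -/
def J21 : Matrix (Fin 3) (Fin 3) ℂ := !![0,0,1;0,1,0;1,0,0]

/-- Case I of Theorem 3.1: for B = [[a,b,c],[d,e,f],[g,h,j]] ∈ SU(2,1) with
a, c, g, j ≠ 0, the cross-ratios of B(0) = (c,f,j), ∞ = (1,0,0), 0 = (0,0,1),
B(∞) = (a,d,g) are 𝕏₁ = g·conj(c), 𝕏₂ = a·conj(j) and 𝕏₃ = aj/(gc). -/
theorem cross_ratios_of_images
    (B : Matrix (Fin 3) (Fin 3) ℂ) (hB : Bᴴ * J21 * B = J21) (hdet : B.det = 1)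
    (ha : B 0 0 ≠ 0) (hc : B 0 2 ≠ 0) (hg : B 2 0 ≠ 0) (hj : B 2 2 ≠ 0) :
    crossRatio ![B 0 2, B 1 2, B 2 2] ![1, 0, 0] ![0, 0, 1] ![B 0 0, B 1 0, B 2 0]
      = B 2 0 * (starRingEnd ℂ) (B 0 2) ∧
    crossRatio ![B 0 2, B 1 2, B 2 2] ![0, 0, 1] ![1, 0, 0] ![B 0 0, B 1 0, B 2 0]
      = B 0 0 * (starRingEnd ℂ) (B 2 2) ∧
    crossRatio ![1, 0, 0] ![0, 0, 1] ![B 0 2, B 1 2, B 2 2] ![B 0 0, B 1 0, B 2 0]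
      = (B 0 0 * B 2 2) / (B 2 0 * B 0 2) := by
  -- (0,2) entry of the SU(2,1) relation:
  have h02 : (starRingEnd ℂ) (B 0 0) * B 2 2 + (starRingEnd ℂ) (B 1 0) * B 1 2
      + (starRingEnd ℂ) (B 2 0) * B 0 2 = 1 := by
    have := congrArg (fun M => M 0 2) hB
    simp [Matrix.mul_apply, J21, Fin.sum_univ_three, Matrix.conjTranspose_apply] at this
    linear_combination this
  -- the conjugated form of it:
  have h02' : B 0 0 * (starRingEnd ℂ) (B 2 2) + B 1 0 * (starRingEnd ℂ) (B 1 2)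
      + B 2 0 * (starRingEnd ℂ) (B 0 2) = 1 := by
    have := congrArg (starRingEnd ℂ) h02
    simpa [map_add, _root_.map_mul] using this
  refine ⟨?_, ?_, ?_⟩ <;>
    · simp [crossRatio, herm, h02']
      try field_simp
      try ring
end
end

section
/- Let B = [[a,b,c],[d,e,f],[g,h,j]] ∈ M₃(ℂ) satisfy Bᴴ J B = J, where J = [[0,0,1],[0,1,0],[1,0,0]]. If the diagonal entries a, e, j are real and the entries c and g are purely imaginary (Re(c) = Re(g) = 0), then b = d = f = h = 0; that is, B has the block form [[a,0,c],[0,e,0],[g,0,j]] and preserves the complex line with polar vector (0,1,0). -/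
open Matrix Complex

noncomputable section

/-- Case II of Theorem 3.1: if B = [[a,b,c],[d,e,f],[g,h,j]] ∈ U(2,1) has real
diagonal entries a, e, j and purely imaginary corner entries c, g, then
b = d = f = h = 0, so B preserves the complex line with polar vector (0,1,0). -/
theorem purely_imaginary_corners_imply_block_form
    (B : Matrix (Fin 3) (Fin 3) ℂ) (hB : Bᴴ * J21 * B = J21)
    (ha : (B 0 0).im = 0) (he : (B 1 1).im = 0) (hj : (B 2 2).im = 0)
    (hc : (B 0 2).re = 0) (hg : (B 2 0).re = 0) :
    B 0 1 = 0 ∧ B 1 0 = 0 ∧ B 1 2 = 0 ∧ B 2 1 = 0 := by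
  have hJJ : J21 * J21 = 1 := by
    ext i j
    fin_cases i <;> fin_cases j <;>
      simp [J21, Matrix.mul_apply, Fin.sum_univ_three, Matrix.one_apply, Matrix.vecHead, Matrix.vecTail]
  have h1 : (J21 * Bᴴ * J21) * B = 1 := by
    calc (J21 * Bᴴ * J21) * B = J21 * (Bᴴ * J21 * B) := by
          simp only [Matrix.mul_assoc]
      _ = 1 := by rw [hB, hJJ]
  have h2 : B * (J21 * Bᴴ * J21) = 1 := mul_eq_one_comm.mp h1
  have hB' : B * J21 * Bᴴ = J21 := by
    have := congrArg (· * J21) h2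
    simp only [Matrix.mul_assoc, hJJ, Matrix.mul_one, Matrix.one_mul] at this
    simpa [Matrix.mul_assoc] using this
  -- conjugation facts
  have ha' : (starRingEnd ℂ) (B 0 0) = B 0 0 := Complex.conj_eq_iff_im.mpr ha
  have he' : (starRingEnd ℂ) (B 1 1) = B 1 1 := Complex.conj_eq_iff_im.mpr he
  have hj' : (starRingEnd ℂ) (B 2 2) = B 2 2 := Complex.conj_eq_iff_im.mpr hj
  have hc' : (starRingEnd ℂ) (B 0 2) = -(B 0 2) := by
    apply Complex.ext <;> simp [hc]
  have hg' : (starRingEnd ℂ) (B 2 0) = -(B 2 0) := by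
    apply Complex.ext <;> simp [hg]
  have key : ∀ z : ℂ, (starRingEnd ℂ) z * z = 0 → z = 0 := by
    intro z hz
    rcases mul_eq_zero.mp hz with h | h
    · simpa using h
    · exact h
  -- entry equations
  have e00 := congrFun (congrFun hB' 0) 0
  have e22 := congrFun (congrFun hB' 2) 2
  have f00 := congrFun (congrFun hB 0) 0
  have f22 := congrFun (congrFun hB 2) 2
  simp [J21, Matrix.mul_apply, Fin.sum_univ_three, Matrix.conjTranspose_apply, Matrix.vecHead, Matrix.vecTail] at e00 e22 f00 f22
  refine ⟨?_, ?_, ?_, ?_⟩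
  · -- b = 0 from (BJBᴴ)₀₀ : a c̄ + b b̄ + c ā = 0
    apply key
    rw [ha', hc'] at e00
    linear_combination e00
  · -- d = 0 from (BᴴJB)₀₀ : ā g + d̄ d + ḡ a = 0
    apply key
    rw [ha', hg'] at f00
    linear_combination f00
  · -- f = 0 from (BᴴJB)₂₂
    apply key
    rw [hj', hc'] at f22
    linear_combination f22
  · -- h = 0 from (BJBᴴ)₂₂
    apply key
    rw [hj', hg'] at e22
    linear_combination e22
end
end

section
/- Let t be a real number with t > 1 and let A = diag(t, 1, 1/t) (which lies in SU(2,1) with respect to J = [[0,0,1],[0,1,0],[1,0,0]]). Let B ∈ M₃(ℂ) satisfy Bᴴ J B = J and det B = 1, and suppose B fixes the boundary point ∞ but not the boundary point 0; concretely, B₂₁ = B₃₁ = 0 (the first column of B is a multiple of e₁) while (B₁₃, B₂₃) ≠ (0,0) (the third column of B is not a multiple of e₃). Then the subgroup of GL(3,ℂ) generated by A and B is not discrete: the subspace topology it inherits from GL(3,ℂ) is not the discrete topology. -/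
open Matrix Complex Filter Topology

noncomputable section

/-- End of Case II of Theorem 3.1: if A = diag(t,1,1/t) with t > 1 and B ∈ SU(2,1)
fixes the boundary point ∞ (first column a multiple of e₁, i.e. B₂₁ = B₃₁ = 0) but
not the boundary point 0 (third column not a multiple of e₃, i.e. (B₁₃,B₂₃) ≠ (0,0)),
then the subgroup of GL(3,ℂ) generated by A and B is not discrete. -/
theorem shared_fixed_point_not_discrete
    (t : ℝ) (ht : 1 < t)
    (B : Matrix (Fin 3) (Fin 3) ℂ) (hB : Bᴴ * J21 * B = J21) (hdet : B.det = 1)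
    (hfix₁ : B 1 0 = 0) (hfix₂ : B 2 0 = 0)
    (hnfix : ¬ (B 0 2 = 0 ∧ B 1 2 = 0))
    (A' B' : GL (Fin 3) ℂ)
    (hA' : (A' : Matrix (Fin 3) (Fin 3) ℂ) = Matrix.diagonal ![(t : ℂ), 1, 1 / (t : ℂ)])
    (hB' : (B' : Matrix (Fin 3) (Fin 3) ℂ) = B) :
    ¬ DiscreteTopology (Subgroup.closure {A', B'} : Subgroup (GL (Fin 3) ℂ)) := by
  have ht0 : (0:ℝ) < t := lt_trans one_pos ht
  set p : ℂ := (t : ℂ) with hpdef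
  have hpne : p ≠ 0 := by
    simp [hpdef, Complex.ofReal_ne_zero]; positivity
  have hd3 := hdet
  rw [Matrix.det_fin_three] at hd3
  rw [hfix₁, hfix₂] at hd3
  ring_nf at hd3
  have hB00 : B 0 0 ≠ 0 := by
    intro h
    rw [h] at hd3; ring_nf at hd3; simp at hd3
  have hB21 : B 2 1 = 0 := by
    have h10 := congrFun (congrFun hB 1) 0
    simp [Matrix.mul_apply, J21, Fin.sum_univ_three, Matrix.conjTranspose_apply,
      hfix₁, hfix₂] at h10
    exact h10.resolve_right hB00
  have hprod : B 0 0 * (B 1 1 * B 2 2) = 1 := by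
    rw [hB21] at hd3; ring_nf at hd3; linear_combination hd3
  -- powers of A'
  set q : ℂ := p⁻¹ with hqdef
  have hAn : ∀ n : ℕ, ((A' ^ n : GL (Fin 3) ℂ) : Matrix (Fin 3) (Fin 3) ℂ)
      = Matrix.diagonal ![p ^ n, 1, q ^ n] := by
    intro n
    rw [Units.val_pow_eq_pow_val, hA', Matrix.diagonal_pow]
    have hv : (![p, 1, 1/p] : Fin 3 → ℂ) ^ n = ![p ^ n, 1, q ^ n] := by
      funext i; fin_cases i <;> simp [hqdef, one_div, inv_pow, Pi.pow_apply]
    rw [hv]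
  have hAninv : ∀ n : ℕ, (((A' ^ n)⁻¹ : GL (Fin 3) ℂ) : Matrix (Fin 3) (Fin 3) ℂ)
      = Matrix.diagonal ![q ^ n, 1, p ^ n] := by
    intro n
    rw [Matrix.coe_units_inv, hAn]
    apply Matrix.inv_eq_left_inv
    rw [Matrix.diagonal_mul_diagonal]
    have hv : (fun i => (![q ^ n, 1, p ^ n] : Fin 3 → ℂ) i * ![p ^ n, 1, q ^ n] i) = (1 : Fin 3 → ℂ) := by
      funext i; fin_cases i <;> simp [hqdef] <;> field_simp
    rw [hv]; exact Matrix.diagonal_one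
  -- the conjugates
  set c : ℕ → GL (Fin 3) ℂ := fun n => (A' ^ n)⁻¹ * B' * A' ^ n with hcdef
  have hc : ∀ n : ℕ, ((c n : GL (Fin 3) ℂ) : Matrix (Fin 3) (Fin 3) ℂ)
      = !![B 0 0, B 0 1 * q ^ n, B 0 2 * q ^ n * q ^ n;
           0, B 1 1, B 1 2 * q ^ n;
           0, 0, B 2 2] := by
    intro n
    have : ((c n : GL (Fin 3) ℂ) : Matrix (Fin 3) (Fin 3) ℂ)
        = Matrix.diagonal ![q ^ n, 1, p ^ n] * B * Matrix.diagonal ![p ^ n, 1, q ^ n] := by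
      simp only [hcdef, Units.val_mul, hAninv, hAn, hB']
    rw [this]
    ext i j
    fin_cases i <;> fin_cases j <;>
      simp [Matrix.mul_apply, Matrix.diagonal, Fin.sum_univ_three, hfix₁, hfix₂, hB21,
        hqdef, Matrix.vecHead, Matrix.vecTail] <;>
      (try field_simp) <;> (try ring) <;> (try simp)
  have hBi : ((B'⁻¹ : GL (Fin 3) ℂ) : Matrix (Fin 3) (Fin 3) ℂ)
      = !![B 1 1 * B 2 2, -(B 0 1 * B 2 2), B 0 1 * B 1 2 - B 0 2 * B 1 1;
           0, B 0 0 * B 2 2, -(B 0 0 * B 1 2);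
           0, 0, B 0 0 * B 1 1] := by
    rw [Matrix.coe_units_inv, hB', Matrix.inv_def, hdet, Matrix.adjugate_fin_three]
    simp [hfix₁, hfix₂, hB21]
  have hcinv : ∀ n : ℕ, (((c n)⁻¹ : GL (Fin 3) ℂ) : Matrix (Fin 3) (Fin 3) ℂ)
      = !![B 1 1 * B 2 2, -(B 0 1 * B 2 2) * q ^ n, (B 0 1 * B 1 2 - B 0 2 * B 1 1) * q ^ n * q ^ n;
           0, B 0 0 * B 2 2, -(B 0 0 * B 1 2) * q ^ n;
           0, 0, B 0 0 * B 1 1] := by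
    intro n
    have h1 : (c n)⁻¹ = (A' ^ n)⁻¹ * B'⁻¹ * A' ^ n := by
      rw [hcdef]; group
    rw [h1]
    have : (((A' ^ n)⁻¹ * B'⁻¹ * A' ^ n : GL (Fin 3) ℂ) : Matrix (Fin 3) (Fin 3) ℂ)
        = Matrix.diagonal ![q ^ n, 1, p ^ n]
          * ((B'⁻¹ : GL (Fin 3) ℂ) : Matrix (Fin 3) (Fin 3) ℂ)
          * Matrix.diagonal ![p ^ n, 1, q ^ n] := by
      simp only [Units.val_mul, hAninv, hAn]
    rw [this, hBi]
    ext i j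
    fin_cases i <;> fin_cases j <;>
      simp [Matrix.mul_apply, Matrix.diagonal, Fin.sum_univ_three, hqdef, Matrix.vecHead, Matrix.vecTail] <;>
      (try field_simp) <;> (try ring) <;> (try simp)
  -- limits
  have hq0 : Tendsto (fun n : ℕ => q ^ n) atTop (nhds 0) := by
    apply tendsto_pow_atTop_nhds_zero_of_norm_lt_one
    rw [hqdef, norm_inv, hpdef, Complex.norm_real, Real.norm_eq_abs, abs_of_pos ht0]
    rw [inv_lt_one_iff₀]; right; exact ht
  set D : Matrix (Fin 3) (Fin 3) ℂ := !![B 0 0, 0, 0; 0, B 1 1, 0; 0, 0, B 2 2] with hDdef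
  set D' : Matrix (Fin 3) (Fin 3) ℂ
    := !![B 1 1 * B 2 2, 0, 0; 0, B 0 0 * B 2 2, 0; 0, 0, B 0 0 * B 1 1] with hD'def
  have hD'D : D' * D = 1 := by
    ext i j
    fin_cases i <;> fin_cases j <;>
      simp [hDdef, hD'def, Matrix.mul_apply, Fin.sum_univ_three, Matrix.one_apply,
        Matrix.vecHead, Matrix.vecTail] <;>
      (try linear_combination hprod)
  have hlim1 : Tendsto (fun n => ((c n : GL (Fin 3) ℂ) : Matrix (Fin 3) (Fin 3) ℂ))
      atTop (nhds D) := by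
    apply tendsto_pi_nhds.mpr
    intro i
    rw [tendsto_pi_nhds]
    intro j
    simp only [hc]
    fin_cases i <;> fin_cases j <;> simp [hDdef]
    · simpa using (hq0.const_mul (B 0 1))
    · simpa using ((hq0.const_mul (B 0 2)).mul hq0)
    · simpa using (hq0.const_mul (B 1 2))
  have hlim2 : Tendsto (fun n => (((c n)⁻¹ : GL (Fin 3) ℂ) : Matrix (Fin 3) (Fin 3) ℂ))
      atTop (nhds D') := by
    apply tendsto_pi_nhds.mpr
    intro i
    rw [tendsto_pi_nhds]
    intro j
    simp only [hcinv]
    fin_cases i <;> fin_cases j <;> simp [hD'def]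
    · simpa using (hq0.const_mul (-(B 0 1 * B 2 2)))
    · simpa using ((hq0.const_mul (B 0 1 * B 1 2 - B 0 2 * B 1 1)).mul hq0)
    · simpa using (hq0.const_mul (-(B 0 0 * B 1 2)))
  -- norm of q
  have hqlt : ‖q‖ < 1 := by
    rw [hqdef, norm_inv, hpdef, Complex.norm_real, Real.norm_eq_abs, abs_of_pos ht0]
    rw [inv_lt_one_iff₀]; right; exact ht
  have hqne : q ≠ 0 := by rw [hqdef]; exact inv_ne_zero hpne
  -- the group and the sequence
  set H : Subgroup (GL (Fin 3) ℂ) := Subgroup.closure {A', B'} with hHdef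
  have hAH : A' ∈ H := Subgroup.subset_closure (by simp)
  have hBH : B' ∈ H := Subgroup.subset_closure (by simp)
  have hcH : ∀ n, c n ∈ H := fun n =>
    H.mul_mem (H.mul_mem (H.inv_mem (H.pow_mem hAH n)) hBH) (H.pow_mem hAH n)
  set d : ℕ → GL (Fin 3) ℂ := fun n => (c n)⁻¹ * c (n + 1) with hddef
  have hdH : ∀ n, d n ∈ H := fun n => H.mul_mem (H.inv_mem (hcH n)) (hcH (n + 1))
  -- d n ≠ 1
  have hdne : ∀ n, d n ≠ 1 := by
    intro n hn
    have hcc : c n = c (n + 1) := by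
      rw [hddef] at hn
      simpa using (inv_mul_eq_one.mp hn)
    have hval : ((c n : GL (Fin 3) ℂ) : Matrix (Fin 3) (Fin 3) ℂ)
        = ((c (n+1) : GL (Fin 3) ℂ) : Matrix (Fin 3) (Fin 3) ℂ) := by rw [hcc]
    rw [hc n, hc (n+1)] at hval
    by_cases h02 : B 0 2 = 0
    · have h12 : B 1 2 ≠ 0 := fun h => hnfix ⟨h02, h⟩
      have he := congrFun (congrFun hval 1) 2
      simp [pow_succ] at he
      rcases he with he | he
      · have h1 : (1 : ℂ) = q :=
          mul_left_cancel₀ (pow_ne_zero n hqne) (by linear_combination he)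
        rw [← h1] at hqlt; simp at hqlt
      · exact h12 he
    · have he := congrFun (congrFun hval 0) 2
      simp [pow_succ] at he
      have hne : B 0 2 * q ^ n * q ^ n ≠ 0 :=
        mul_ne_zero (mul_ne_zero h02 (pow_ne_zero n hqne)) (pow_ne_zero n hqne)
      have h1 : (1 : ℂ) = q * q :=
        mul_left_cancel₀ hne (by linear_combination he)
      have h2 := congrArg norm h1
      rw [norm_one, norm_mul] at h2
      nlinarith [norm_nonneg q, hqlt]
  -- convergence of d to 1
  have hlim1' : Tendsto (fun n => ((c (n+1) : GL (Fin 3) ℂ) : Matrix (Fin 3) (Fin 3) ℂ))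
      atTop (nhds D) := hlim1.comp (tendsto_add_atTop_nat 1)
  have hlim2' : Tendsto (fun n => (((c (n+1))⁻¹ : GL (Fin 3) ℂ) : Matrix (Fin 3) (Fin 3) ℂ))
      atTop (nhds D') := hlim2.comp (tendsto_add_atTop_nat 1)
  have hdval : Tendsto (fun n => ((d n : GL (Fin 3) ℂ) : Matrix (Fin 3) (Fin 3) ℂ))
      atTop (nhds 1) := by
    have : Tendsto (fun n => (((c n)⁻¹ : GL (Fin 3) ℂ) : Matrix (Fin 3) (Fin 3) ℂ)
        * ((c (n+1) : GL (Fin 3) ℂ) : Matrix (Fin 3) (Fin 3) ℂ)) atTop (nhds (D' * D)) :=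
      hlim2.mul hlim1'
    rw [hD'D] at this
    simpa [hddef, Units.val_mul] using this
  have hdinv : Tendsto (fun n => (((d n)⁻¹ : GL (Fin 3) ℂ) : Matrix (Fin 3) (Fin 3) ℂ))
      atTop (nhds 1) := by
    have : Tendsto (fun n => (((c (n+1))⁻¹ : GL (Fin 3) ℂ) : Matrix (Fin 3) (Fin 3) ℂ)
        * ((c n : GL (Fin 3) ℂ) : Matrix (Fin 3) (Fin 3) ℂ)) atTop (nhds (D' * D)) :=
      hlim2'.mul hlim1
    rw [hD'D] at this
    simpa [hddef, _root_.mul_inv_rev, Units.val_mul] using this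
  have hdGL : Tendsto d atTop (nhds (1 : GL (Fin 3) ℂ)) := by
    rw [Units.isEmbedding_embedProduct.tendsto_nhds_iff]
    have h1 : Units.embedProduct _ (1 : GL (Fin 3) ℂ)
        = ((1 : Matrix (Fin 3) (Fin 3) ℂ), MulOpposite.op (1 : Matrix (Fin 3) (Fin 3) ℂ)) := by
      simp [Units.embedProduct_apply]
    rw [show (Units.embedProduct _ ∘ d)
        = fun n => (((d n : GL (Fin 3) ℂ) : Matrix (Fin 3) (Fin 3) ℂ),
            MulOpposite.op (((d n)⁻¹ : GL (Fin 3) ℂ) : Matrix (Fin 3) (Fin 3) ℂ)) from by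
          funext n; simp [Units.embedProduct_apply], h1]
    exact hdval.prodMk_nhds ((MulOpposite.continuous_op.tendsto _).comp hdinv)
  -- conclude
  intro hdisc
  have hsub : Tendsto (fun n => (⟨d n, hdH n⟩ : H)) atTop (nhds (1 : H)) := by
    rw [tendsto_subtype_rng]
    exact hdGL
  rw [nhds_discrete, tendsto_pure] at hsub
  obtain ⟨n, hn⟩ := hsub.exists
  exact hdne n (congrArg Subtype.val hn)
end
end
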